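/- arXiv:0905.3705 — 2 statements merged into one kernel-verified Lean document; each statement's English description precedes it below -/
import Mathlib

section
/- Let a, d, n be positive integers with gcd(a, n) = 1 and n ≥ 2. Let ζ ∈ ℂ be a primitive n-th root of unity and ω ∈ ℂ a primitive (dn²)-th root of unity. Let A = ℂ[u,v,y]/(uv − y^{dn}) with the ℂ-algebra automorphism σ induced by u ↦ ζu, v ↦ ζ⁻¹v, y ↦ ζᵃy (well defined since uv − y^{dn} is sent to itself), and let B = ℂ[s,t] with the ℂ-algebra automorphism τ determined by s ↦ ωs, t ↦ ω^{dna−1}t. Then the fixed subalgebra of A under σ is isomorphic as a ℂ-algebra to the fixed subalgebra of B under τ. (That is, the central fiber of the Kollár–Shepherd-Barron ℚ-Gorenstein smoothing family is the cyclic quotient singularity of type 1/(dn²)(1, dna−1).) -/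
/-!
The map `u ↦ s^{dn}, v ↦ t^{dn}, y ↦ st` identifies `ℂ[u,v,y]/(uv − y^{dn})` with the span of
the monomials `s^i t^j` with `i ≡ j (mod dn)`: two monomials in `u, v, y` with the same image
differ by a multiple of `uv − y^{dn}`. Choose `m` with `ζ^m = ω^{dn}`; then `m` is prime to `n`,
so `σ^m` has the same invariants as `σ`, and through this map `σ^m` becomes `τ`. Finally a
`τ`-invariant monomial `s^i t^j` has `dn² ∣ i + (dna − 1) j`, hence `i ≡ j (mod dn)`, so all
`τ`-invariants lie in the image.
-/

open MvPolynomial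

/-- The fixed subalgebra of a `ℂ`-algebra automorphism. -/
def fixedSubalgebra {R : Type*} [CommSemiring R] [Algebra ℂ R]
    (φ : R ≃ₐ[ℂ] R) : Subalgebra ℂ R :=
  AlgHom.equalizer (φ : R →ₐ[ℂ] R) (AlgHom.id ℂ R)

/-- `A = ℂ[u,v,y]/(uv − y^{dn})`, with `u = X 0`, `v = X 1`, `y = X 2`. -/
abbrev CentralFiberAlg (d n : ℕ) : Type :=
  MvPolynomial (Fin 3) ℂ ⧸
    Ideal.span ({X 0 * X 1 - X 2 ^ (d * n)} : Set (MvPolynomial (Fin 3) ℂ))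

theorem AlgEquiv.pow_apply_of_apply_eq_smul {R A : Type*} [CommSemiring R] [Semiring A]
    [Algebra R A] {φ : A ≃ₐ[R] A} {x : A} {c : R} (h : φ x = c • x) (j : ℕ) :
    (φ ^ j) x = c ^ j • x := by
  induction j with
  | zero => simp
  | succ j ih => rw [pow_succ', AlgEquiv.mul_apply, ih, map_smul, h, smul_smul, pow_succ]

theorem Ideal.Quotient.mk_C_mul {σ R : Type*} [CommRing R] (I : Ideal (MvPolynomial σ R))
    (c : R) (p : MvPolynomial σ R) : Ideal.Quotient.mk I (C c * p) = c • Ideal.Quotient.mk I p := by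
  rw [← smul_eq_C_mul]
  exact map_smul (Ideal.Quotient.mkₐ R I) c p

theorem coeff_apply_of_apply_X_eq_smul {σ R : Type*} [CommSemiring R]
    (τ : MvPolynomial σ R →ₐ[R] MvPolynomial σ R) (w : σ → R) (hτ : ∀ i, τ (X i) = w i • X i)
    (e : σ →₀ ℕ) (p : MvPolynomial σ R) :
    coeff e (τ p) = (e.prod fun i k => w i ^ k) * coeff e p := by
  induction p using MvPolynomial.induction_on' with
  | monomial e' c =>
    have hmon : τ (monomial e' c) = monomial e' ((e'.prod fun i k => w i ^ k) * c) := by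
      simp only [monomial_eq, map_mul, map_finsuppProd, map_pow, hτ, smul_eq_C_mul, mul_pow,
        Finsupp.prod_mul]
      rw [← algebraMap_eq, AlgHom.commutes, algebraMap_eq]
      ring
    classical
    rw [hmon, coeff_monomial, coeff_monomial]
    split_ifs with h
    · rw [h]
    · rw [mul_zero]
  | add p q hp hq => rw [map_add, coeff_add, coeff_add, hp, hq, mul_add]

theorem pow_pred_pow_eq_inv_pow {M : Type*} [DivisionMonoid M] {ω : M} {k a : ℕ}
    (hka : 0 < k * a) (h : ω ^ (k * a * k) = 1) : (ω ^ (k * a - 1)) ^ k = (ω ^ k)⁻¹ := by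
  refine eq_inv_of_mul_eq_one_left ?_
  rw [← pow_mul, ← pow_add, ← add_one_mul,
    Nat.sub_add_cancel (Nat.one_le_iff_ne_zero.mpr hka.ne'), h]

theorem Nat.modEq_of_dvd_add_pred_mul {k a i j : ℕ} (hka : 0 < k * a)
    (h : k ∣ i + (k * a - 1) * j) : i ≡ j [MOD k] := by
  have hj : j + (k * a - 1) * j = k * (a * j) := by
    rw [← one_add_mul, Nat.add_sub_cancel' (Nat.one_le_iff_ne_zero.mpr hka.ne'), mul_assoc]
  refine Nat.ModEq.add_right_cancel' ((k * a - 1) * j) ?_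
  rw [hj]
  exact (Nat.modEq_zero_iff_dvd.mpr h).trans (Nat.modEq_zero_iff_dvd.mpr (dvd_mul_right _ _)).symm

noncomputable section BinomialQuotient

variable (R : Type*) [CommRing R] (k : ℕ)

abbrev binomialIdeal : Ideal (MvPolynomial (Fin 3) R) :=
  Ideal.span {X 0 * X 1 - X 2 ^ k}

abbrev BinomialQuotient : Type _ :=
  MvPolynomial (Fin 3) R ⧸ binomialIdeal R k

def veroneseHom : MvPolynomial (Fin 3) R →ₐ[R] MvPolynomial (Fin 2) R :=
  aeval ![X 0 ^ k, X 1 ^ k, X 0 * X 1]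

def exponentImage (e : Fin 3 →₀ ℕ) : Fin 2 →₀ ℕ :=
  Finsupp.single 0 (k * e 0 + e 2) + Finsupp.single 1 (k * e 1 + e 2)

-- A preimage of `s ^ e 0 * t ^ e 1` under `exponentImage` whenever `e 0 ≡ e 1 [MOD k]`.
def exponentSection (e : Fin 2 →₀ ℕ) : Fin 3 →₀ ℕ :=
  if e 1 ≤ e 0 then Finsupp.single 0 ((e 0 - e 1) / k) + Finsupp.single 2 (e 1)
  else Finsupp.single 1 ((e 1 - e 0) / k) + Finsupp.single 2 (e 0)

variable {R k}

@[simp] theorem exponentImage_apply_zero (e : Fin 3 →₀ ℕ) :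
    exponentImage k e 0 = k * e 0 + e 2 := by
  simp [exponentImage]

@[simp] theorem exponentImage_apply_one (e : Fin 3 →₀ ℕ) :
    exponentImage k e 1 = k * e 1 + e 2 := by
  simp [exponentImage]

theorem exponentImage_modEq (e : Fin 3 →₀ ℕ) :
    exponentImage k e 0 ≡ exponentImage k e 1 [MOD k] := by
  simp only [exponentImage_apply_zero, exponentImage_apply_one]
  exact Nat.ModEq.add_right _ (by simp [Nat.ModEq])

theorem exponentImage_exponentSection {e : Fin 2 →₀ ℕ} (he : e 0 ≡ e 1 [MOD k]) :
    exponentImage k (exponentSection k e) = e := by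
  ext i
  fin_cases i
  all_goals
    unfold exponentSection
    split_ifs with hle
  · have := Nat.mul_div_cancel' ((Nat.modEq_iff_dvd' hle).mp he.symm)
    simp; omega
  · simp
  · simp
  · have := Nat.mul_div_cancel' ((Nat.modEq_iff_dvd' (by omega)).mp he)
    simp; omega

theorem veroneseHom_monomial (e : Fin 3 →₀ ℕ) (c : R) :
    veroneseHom R k (monomial e c) = monomial (exponentImage k e) c := by
  rw [veroneseHom, aeval_monomial, monomial_eq, Finsupp.prod_fintype _ _ (by simp),
    Finsupp.prod_fintype _ _ (by simp), Fin.prod_univ_three, Fin.prod_univ_two]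
  simp only [exponentImage_apply_zero, exponentImage_apply_one, Matrix.cons_val_zero,
    Matrix.cons_val_one, Matrix.cons_val_two, Matrix.head_cons, Matrix.tail_cons,
    MvPolynomial.algebraMap_eq]
  ring

theorem mk_monomial_eq_of_exponentImage_eq (hk : 0 < k) {e e' : Fin 3 →₀ ℕ}
    (h : exponentImage k e = exponentImage k e') (c : R) :
    Ideal.Quotient.mk (binomialIdeal R k) (monomial e c) =
      Ideal.Quotient.mk (binomialIdeal R k) (monomial e' c) := by
  wlog h2 : e 2 ≤ e' 2 generalizing e e'
  · exact (this h.symm (by omega)).symm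
  have h0 := DFunLike.congr_fun h 0
  have h1 := DFunLike.congr_fun h 1
  simp only [exponentImage_apply_zero, exponentImage_apply_one] at h0 h1
  obtain ⟨δ, he0⟩ : ∃ δ, e 0 = e' 0 + δ :=
    Nat.exists_eq_add_of_le (Nat.le_of_mul_le_mul_left (by omega) hk)
  have he2 : e' 2 = e 2 + k * δ := by rw [he0, mul_add] at h0; omega
  have he1 : e 1 = e' 1 + δ := Nat.eq_of_mul_eq_mul_left hk (by rw [mul_add]; omega)
  have hdiff : monomial e c - monomial e' c =
      C c * X 0 ^ e' 0 * X 1 ^ e' 1 * X 2 ^ e 2 * ((X 0 * X 1) ^ δ - (X 2 ^ k) ^ δ) := by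
    rw [monomial_eq, monomial_eq, Finsupp.prod_fintype _ _ (by simp),
      Finsupp.prod_fintype _ _ (by simp), Fin.prod_univ_three, Fin.prod_univ_three,
      he0, he1, he2]
    ring
  rw [Ideal.Quotient.eq, Ideal.mem_span_singleton, hdiff]
  exact (sub_dvd_pow_sub_pow _ _ δ).mul_left _

theorem veroneseHom_binomial : veroneseHom R k (X 0 * X 1 - X 2 ^ k) = 0 := by
  simp [veroneseHom, mul_pow]

variable (R k) in
def quotientVeroneseHom :
    BinomialQuotient R k →ₐ[R] MvPolynomial (Fin 2) R :=
  Ideal.Quotient.liftₐ _ (veroneseHom R k) fun p hp => by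
    obtain ⟨q, rfl⟩ := Ideal.mem_span_singleton'.mp hp
    rw [map_mul, veroneseHom_binomial, mul_zero]

@[simp] theorem quotientVeroneseHom_mk (p : MvPolynomial (Fin 3) R) :
    quotientVeroneseHom R k (Ideal.Quotient.mk _ p) = veroneseHom R k p :=
  rfl

theorem quotientVeroneseHom_injective (hk : 0 < k) :
    Function.Injective (quotientVeroneseHom R k) := by
  -- `ψ` is a left inverse because monomials with the same image agree modulo `uv - y ^ k`.
  let ψ : MvPolynomial (Fin 2) R →ₗ[R] BinomialQuotient R k :=
    (basisMonomials (Fin 2) R).constr R fun e =>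
      Ideal.Quotient.mk _ (monomial (exponentSection k e) 1)
  have hψ (e : Fin 2 →₀ ℕ) (c : R) :
      ψ (monomial e c) = c • Ideal.Quotient.mk _ (monomial (exponentSection k e) 1) := by
    have : monomial e c = c • basisMonomials (Fin 2) R e := by simp [smul_monomial]
    rw [this, map_smul, Module.Basis.constr_basis]
  refine Function.LeftInverse.injective (g := ψ) fun x => ?_
  obtain ⟨p, rfl⟩ := Ideal.Quotient.mk_surjective x
  induction p using MvPolynomial.induction_on' with
  | monomial e c =>
    rw [quotientVeroneseHom_mk, veroneseHom_monomial, hψ,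
      mk_monomial_eq_of_exponentImage_eq hk
        (exponentImage_exponentSection (exponentImage_modEq e)),
      ← Ideal.Quotient.mkₐ_eq_mk R, ← map_smul, smul_monomial, smul_eq_mul, mul_one]
  | add p q hp hq => rw [map_add, map_add, map_add, hp, hq]

theorem monomial_mem_range_quotientVeroneseHom {e : Fin 2 →₀ ℕ} (he : e 0 ≡ e 1 [MOD k])
    (c : R) : monomial e c ∈ (quotientVeroneseHom R k).range :=
  (AlgHom.mem_range _).mpr ⟨Ideal.Quotient.mk _ (monomial (exponentSection k e) c), by
    rw [quotientVeroneseHom_mk, veroneseHom_monomial, exponentImage_exponentSection he]⟩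

theorem binomialQuotient_algHom_ext {B : Type*} [Semiring B] [Algebra R B]
    {f g : BinomialQuotient R k →ₐ[R] B}
    (h : ∀ i, f (Ideal.Quotient.mk _ (X i)) = g (Ideal.Quotient.mk _ (X i))) : f = g :=
  Ideal.Quotient.algHom_ext R (MvPolynomial.algHom_ext h)

theorem quotientVeroneseHom_comp_eq {σ : BinomialQuotient R k →ₐ[R] BinomialQuotient R k}
    {τ : MvPolynomial (Fin 2) R →ₐ[R] MvPolynomial (Fin 2) R} {l m : R}
    (hσu : σ (Ideal.Quotient.mk _ (X 0)) = l ^ k • Ideal.Quotient.mk _ (X 0))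
    (hσv : σ (Ideal.Quotient.mk _ (X 1)) = m ^ k • Ideal.Quotient.mk _ (X 1))
    (hσy : σ (Ideal.Quotient.mk _ (X 2)) = (l * m) • Ideal.Quotient.mk _ (X 2))
    (hτs : τ (X 0) = l • X 0) (hτt : τ (X 1) = m • X 1) :
    (quotientVeroneseHom R k).comp σ = τ.comp (quotientVeroneseHom R k) := by
  refine binomialQuotient_algHom_ext fun i => ?_
  fin_cases i <;>
    simp [hσu, hσv, hσy, hτs, hτt, veroneseHom, smul_pow, smul_smul, mul_comm]

theorem binomialQuotient_algEquiv_pow_eq_one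
    {σ : BinomialQuotient R k ≃ₐ[R] BinomialQuotient R k}
    (c : Fin 3 → R) (hσ : ∀ i, σ (Ideal.Quotient.mk _ (X i)) = c i • Ideal.Quotient.mk _ (X i))
    {N : ℕ} (hc : ∀ i, c i ^ N = 1) : σ ^ N = 1 :=
  AlgEquiv.coe_toAlgHom_injective <| binomialQuotient_algHom_ext fun i => by
    simp only [AlgEquiv.coe_toAlgHom, AlgEquiv.pow_apply_of_apply_eq_smul (hσ i), hc i,
      one_smul, AlgEquiv.one_apply]

end BinomialQuotient

section FixedSubalgebra

variable {A B : Type*} [CommSemiring A] [Algebra ℂ A] [CommSemiring B] [Algebra ℂ B]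

theorem mem_fixedSubalgebra {φ : A ≃ₐ[ℂ] A} {x : A} : x ∈ fixedSubalgebra φ ↔ φ x = x :=
  Iff.rfl

theorem fixedSubalgebra_le_pow (φ : A ≃ₐ[ℂ] A) (j : ℕ) :
    fixedSubalgebra φ ≤ fixedSubalgebra (φ ^ j) := fun x hx => by
  rw [mem_fixedSubalgebra, AlgEquiv.coe_pow]
  exact Function.IsFixedPt.iterate hx j

theorem fixedSubalgebra_pow_eq_of_coprime {φ : A ≃ₐ[ℂ] A} {N m : ℕ} (hN : φ ^ N = 1)
    (hm : m.Coprime N) : fixedSubalgebra (φ ^ m) = fixedSubalgebra φ := by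
  obtain ⟨j, hj⟩ :=
    exists_pow_eq_self_of_coprime (hm.coprime_dvd_right (orderOf_dvd_of_pow_eq_one hN))
  refine le_antisymm ?_ (fixedSubalgebra_le_pow φ m)
  simpa only [hj] using fixedSubalgebra_le_pow (φ ^ m) j

theorem map_fixedSubalgebra_eq {Φ : A →ₐ[ℂ] B} (hΦ : Function.Injective Φ) {σ : A ≃ₐ[ℂ] A}
    {τ : B ≃ₐ[ℂ] B} (hcomm : Φ.comp σ = (τ : B →ₐ[ℂ] B).comp Φ)
    (hrange : fixedSubalgebra τ ≤ Φ.range) :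
    (fixedSubalgebra σ).map Φ = fixedSubalgebra τ := by
  have hcomm' (x : A) : Φ (σ x) = τ (Φ x) := AlgHom.congr_fun hcomm x
  refine le_antisymm ?_ fun p hp => ?_
  · intro p hp
    obtain ⟨x, hx, rfl⟩ := Subalgebra.mem_map.mp hp
    rw [mem_fixedSubalgebra, ← hcomm', mem_fixedSubalgebra.mp hx]
  · obtain ⟨x, rfl⟩ := (AlgHom.mem_range _).mp (hrange hp)
    exact ⟨x, hΦ ((hcomm' x).trans hp), rfl⟩

end FixedSubalgebra

theorem fixedSubalgebra_le_range_quotientVeroneseHom {k a N : ℕ} (hka : 0 < k * a)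
    (hkN : k ∣ N) {ω : ℂ} (hω : IsPrimitiveRoot ω N)
    (τ : MvPolynomial (Fin 2) ℂ ≃ₐ[ℂ] MvPolynomial (Fin 2) ℂ)
    (hτs : τ (X 0) = ω • X 0) (hτt : τ (X 1) = ω ^ (k * a - 1) • X 1) :
    fixedSubalgebra τ ≤ (quotientVeroneseHom ℂ k).range := by
  intro p hp
  rw [p.as_sum]
  refine Subalgebra.sum_mem _ fun e he => monomial_mem_range_quotientVeroneseHom ?_ _
  have hcoeff := coeff_apply_of_apply_X_eq_smul (τ : MvPolynomial (Fin 2) ℂ →ₐ[ℂ] _)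
    ![ω, ω ^ (k * a - 1)] (fun i => by fin_cases i <;> simpa) e p
  rw [show (τ : MvPolynomial (Fin 2) ℂ →ₐ[ℂ] _) p = p from hp,
    Finsupp.prod_fintype _ _ (by simp), Fin.prod_univ_two] at hcoeff
  have hone : ω ^ (e 0 + (k * a - 1) * e 1) = 1 := by
    rw [pow_add, pow_mul]
    simpa using (mul_left_eq_self₀.mp hcoeff.symm).resolve_right (mem_support_iff.mp he)
  exact Nat.modEq_of_dvd_add_pred_mul hka (hkN.trans ((hω.pow_eq_one_iff_dvd _).mp hone))

theorem central_fiber_is_cyclic_quotient_singularity_general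
    (a d n : ℕ) (ha : 0 < a) (hd : 0 < d) (hn : 2 ≤ n)
    (ζ ω : ℂ) (hζ : IsPrimitiveRoot ζ n) (hω : IsPrimitiveRoot ω (d * n ^ 2))
    (σ : CentralFiberAlg d n ≃ₐ[ℂ] CentralFiberAlg d n)
    (hσu : σ (Ideal.Quotient.mk _ (X 0)) = Ideal.Quotient.mk _ (C ζ * X 0))
    (hσv : σ (Ideal.Quotient.mk _ (X 1)) = Ideal.Quotient.mk _ (C ζ⁻¹ * X 1))
    (hσy : σ (Ideal.Quotient.mk _ (X 2)) = Ideal.Quotient.mk _ (C (ζ ^ a) * X 2))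
    (τ : MvPolynomial (Fin 2) ℂ ≃ₐ[ℂ] MvPolynomial (Fin 2) ℂ)
    (hτs : τ (X 0) = C ω * X 0)
    (hτt : τ (X 1) = C (ω ^ (d * n * a - 1)) * X 1) :
    Nonempty ((fixedSubalgebra σ) ≃ₐ[ℂ] (fixedSubalgebra τ)) := by
  have hn0 : 0 < n := by omega
  have hdna : 0 < d * n * a := by positivity
  rw [Ideal.Quotient.mk_C_mul] at hσu hσv hσy
  rw [← smul_eq_C_mul] at hτs hτt
  have hσn : σ ^ n = 1 := binomialQuotient_algEquiv_pow_eq_one ![ζ, ζ⁻¹, ζ ^ a]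
    (fun i => by fin_cases i <;> assumption)
    (fun i => by fin_cases i <;> simp [inv_pow, pow_right_comm ζ a n, hζ.pow_eq_one])
  have : NeZero n := ⟨hn0.ne'⟩
  have hωdn : IsPrimitiveRoot (ω ^ (d * n)) n := hω.pow (by positivity) (by ring)
  obtain ⟨m, -, hcop, hm⟩ := hζ.isPrimitiveRoot_iff.mp hωdn
  have hv : ζ⁻¹ ^ m = (ω ^ (d * n * a - 1)) ^ (d * n) := by
    rw [inv_pow, hm,
      pow_pred_pow_eq_inv_pow hdna ((hω.pow_eq_one_iff_dvd _).mpr ⟨d * a, by ring⟩)]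
  have hy : (ζ ^ a) ^ m = ω * ω ^ (d * n * a - 1) := by
    rw [← pow_mul, mul_comm, pow_mul, hm, ← pow_mul, mul_pow_sub_one hdna.ne']
  have hcomm := quotientVeroneseHom_comp_eq (k := d * n) (σ := (σ ^ m).toAlgHom)
    (τ := τ.toAlgHom)
    (by rw [AlgEquiv.coe_toAlgHom, AlgEquiv.pow_apply_of_apply_eq_smul hσu, hm])
    (by rw [AlgEquiv.coe_toAlgHom, AlgEquiv.pow_apply_of_apply_eq_smul hσv, hv])
    (by rw [AlgEquiv.coe_toAlgHom, AlgEquiv.pow_apply_of_apply_eq_smul hσy, hy]) hτs hτt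
  have hinj := quotientVeroneseHom_injective (R := ℂ) (by positivity : 0 < d * n)
  have hmap := map_fixedSubalgebra_eq hinj hcomm
    (fixedSubalgebra_le_range_quotientVeroneseHom hdna ⟨n, by ring⟩ hω τ hτs hτt)
  rw [fixedSubalgebra_pow_eq_of_coprime hσn hcop] at hmap
  exact ⟨(Subalgebra.equivMapOfInjective _ _ hinj).trans (Subalgebra.equivOfEq _ _ hmap)⟩

/-- The fixed subalgebra of `ℂ[u,v,y]/(uv − y^{dn})` under
`u ↦ ζu, v ↦ ζ⁻¹v, y ↦ ζᵃy` (`ζ` a primitive `n`-th root of unity) is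
isomorphic to the fixed subalgebra of `ℂ[s,t]` under
`s ↦ ωs, t ↦ ω^{dna−1}t` (`ω` a primitive `dn²`-th root of unity): the
central fiber of the KSB family is the cyclic quotient singularity of type
`1/(dn²)(1, dna−1)`. -/
theorem central_fiber_is_cyclic_quotient_singularity
    (a d n : ℕ) (ha : 0 < a) (hd : 0 < d) (hn : 2 ≤ n)
    (hgcd : Nat.gcd a n = 1)
    (ζ ω : ℂ) (hζ : IsPrimitiveRoot ζ n) (hω : IsPrimitiveRoot ω (d * n ^ 2))
    (σ : CentralFiberAlg d n ≃ₐ[ℂ] CentralFiberAlg d n)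
    (hσu : σ (Ideal.Quotient.mk _ (X 0)) = Ideal.Quotient.mk _ (C ζ * X 0))
    (hσv : σ (Ideal.Quotient.mk _ (X 1)) = Ideal.Quotient.mk _ (C ζ⁻¹ * X 1))
    (hσy : σ (Ideal.Quotient.mk _ (X 2)) = Ideal.Quotient.mk _ (C (ζ ^ a) * X 2))
    (τ : MvPolynomial (Fin 2) ℂ ≃ₐ[ℂ] MvPolynomial (Fin 2) ℂ)
    (hτs : τ (X 0) = C ω * X 0)
    (hτt : τ (X 1) = C (ω ^ (d * n * a - 1)) * X 1) :
    Nonempty ((fixedSubalgebra σ) ≃ₐ[ℂ] (fixedSubalgebra τ)) :=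
  central_fiber_is_cyclic_quotient_singularity_general a d n ha hd hn ζ ω hζ hω σ hσu hσv hσy τ hτs
    hτt
end

section
/- Let T be the smallest set of nonempty integer lists such that: [4] ∈ T; for every m ≥ 0 the list [3, 2, …, 2, 3] with m twos is in T; and whenever [b₁,…,b_r] ∈ T, both [2, b₁, …, b_{r−1}, b_r + 1] and [b₁ + 1, b₂, …, b_r, 2] are in T. Then every list [b₁,…,b_r] of integers, each ≥ 2, satisfying HJ([b₁,…,b_r]) = dn²/(dna − 1) for some positive integers d, n, a with n ≥ 2, 0 < a < n and gcd(a, n) = 1, belongs to T. (Every singularity of class T that is not a rational double point is obtained from the basic strings by iterating the two operations.) -/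
/-- Hirzebruch–Jung continued fraction value of a list of integers:
`HJ [b] = b` and `HJ (b :: l) = b − 1 / HJ l` (junk value `0` on `[]`). -/
def HJ : List ℤ → ℚ
  | [] => 0
  | [b] => (b : ℚ)
  | b :: l => (b : ℚ) - 1 / HJ l

/-- A list of integers `≥ 2` is of class `T` if its Hirzebruch–Jung value is
`dn²/(dna − 1)` with `d, n, a` positive, `n ≥ 2`, `0 < a < n`, `gcd(a,n)=1`. -/
def IsClassT (l : List ℤ) : Prop :=
  (∀ b ∈ l, 2 ≤ b) ∧
  ∃ d n a : ℕ, 0 < d ∧ 2 ≤ n ∧ 0 < a ∧ a < n ∧ Nat.gcd a n = 1 ∧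
    HJ l = (d * n ^ 2 : ℚ) / (d * n * a - 1)

/-- The smallest set of integer lists containing `[4]` and all strings
`[3, 2, …, 2, 3]`, and closed under the two blow-up operations
`[b₁,…,b_r] ↦ [2, b₁, …, b_{r−1}, b_r + 1]` and
`[b₁,…,b_r] ↦ [b₁ + 1, b₂, …, b_r, 2]`. -/
inductive TGen : List ℤ → Prop
  | base : TGen [4]
  | chain (m : ℕ) : TGen (3 :: (List.replicate m 2 ++ [3]))
  | left {l : List ℤ} : TGen l → TGen (2 :: (l.dropLast ++ [l.getLastD 0 + 1]))
  | right {l : List ℤ} : TGen l → TGen (((l.headI + 1) :: l.tail) ++ [2])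

/-!
Encode a string `[b₁, …, b_r]` by its continuant matrix `∏ !![bᵢ, -1; 1, 0]`, of determinant 1.
Its first column `(P, Q)` gives `HJ = P / Q` in lowest terms with `0 ≤ Q < P`, and reversing the
string transposes it up to signs. If `HJ = dn²/(dna − 1)`, the first column is `(dn², dna − 1)`,
and the determinant together with the same bounds for the reversed string pins down the whole
matrix in terms of `(d, n, a)`. When `n < 2a` the string starts with `2` and ends with an entry
`≥ 3`; undoing the left blow-up gives a string with parameters `(d, a, 2a − n)`, so we induct on
`n`. When `n > 2a` we reverse the string (`a ↦ n − a`), and `n = 2a` leaves the parameters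
`(da², 2, 1)`, which are those of `[4]` and `[3, 2, …, 2, 3]`; a string of entries `≥ 2` is
determined by its matrix.
-/

open Matrix

lemma matrix_fin_two_eq_iff {α : Type*} {a b c d a' b' c' d' : α} :
    !![a, b; c, d] = !![a', b'; c', d'] ↔ a = a' ∧ b = b' ∧ c = c' ∧ d = d' := by
  simp only [EmbeddingLike.apply_eq_iff_eq, vecCons_inj, and_true, and_assoc]

def hjStep (b : ℤ) : Matrix (Fin 2) (Fin 2) ℤ := !![b, -1; 1, 0]

def hjMatrix (l : List ℤ) : Matrix (Fin 2) (Fin 2) ℤ := (l.map hjStep).prod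

@[simp] lemma hjStep_mul_apply_zero (b : ℤ) (M : Matrix (Fin 2) (Fin 2) ℤ) (j : Fin 2) :
    (hjStep b * M) 0 j = b * M 0 j - M 1 j := by
  simp [hjStep, mul_apply, Fin.sum_univ_two, sub_eq_add_neg]

@[simp] lemma hjStep_mul_apply_one (b : ℤ) (M : Matrix (Fin 2) (Fin 2) ℤ) (j : Fin 2) :
    (hjStep b * M) 1 j = M 0 j := by
  simp [hjStep, mul_apply, Fin.sum_univ_two]

@[simp] lemma hjMatrix_nil : hjMatrix [] = 1 := rfl

@[simp] lemma hjMatrix_cons (b : ℤ) (l : List ℤ) :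
    hjMatrix (b :: l) = hjStep b * hjMatrix l := by
  simp [hjMatrix]

lemma hjMatrix_append_singleton (l : List ℤ) (c : ℤ) :
    hjMatrix (l ++ [c]) = hjMatrix l * hjStep c := by
  simp [hjMatrix]

lemma det_hjMatrix (l : List ℤ) : (hjMatrix l).det = 1 := by
  induction l with
  | nil => simp
  | cons b l ih => rw [hjMatrix_cons, det_mul, ih, mul_one]; simp [hjStep, det_fin_two]

lemma isCoprime_hjMatrix (l : List ℤ) : IsCoprime (hjMatrix l 0 0) (hjMatrix l 1 0) := by
  have h := det_hjMatrix l
  rw [det_fin_two] at h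
  exact ⟨hjMatrix l 1 1, -hjMatrix l 0 1, by linarith⟩

lemma hjMatrix_reverse (l : List ℤ) :
    hjMatrix l.reverse =
      !![hjMatrix l 0 0, -hjMatrix l 1 0; -hjMatrix l 0 1, hjMatrix l 1 1] := by
  induction l with
  | nil => simp [one_fin_two]
  | cons b l ih =>
    rw [List.reverse_cons, hjMatrix_append_singleton, ih, hjMatrix_cons, hjStep, mul_fin_two,
      eta_fin_two (hjMatrix l), mul_fin_two, matrix_fin_two_eq_iff]
    simp only [of_apply, cons_val', cons_val_zero, cons_val_one, empty_val', cons_val_fin_one]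
    refine ⟨?_, ?_, ?_, ?_⟩ <;> ring

lemma hjMatrix_bounds {l : List ℤ} (hl : ∀ b ∈ l, 2 ≤ b) :
    0 ≤ hjMatrix l 1 0 ∧ hjMatrix l 1 0 < hjMatrix l 0 0 := by
  induction l with
  | nil => simp
  | cons b l ih =>
    obtain ⟨h0, h1⟩ := ih fun x hx => hl x (List.mem_cons_of_mem _ hx)
    have hb := hl b List.mem_cons_self
    simp only [hjMatrix_cons, hjStep_mul_apply_zero, hjStep_mul_apply_one]
    constructor <;> nlinarith

lemma hjMatrix_apply_zero_one_bounds {l : List ℤ} (hl : ∀ b ∈ l, 2 ≤ b) :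
    -hjMatrix l 0 0 < hjMatrix l 0 1 ∧ hjMatrix l 0 1 ≤ 0 := by
  have := hjMatrix_bounds (l := l.reverse) fun b hb => hl b (List.mem_reverse.mp hb)
  simp only [hjMatrix_reverse, of_apply, cons_val', cons_val_zero, cons_val_fin_one,
    cons_val_one, Int.neg_nonneg] at this
  omega

lemma hjMatrix_apply_one_zero_pos {l : List ℤ} (hne : l ≠ []) (hl : ∀ b ∈ l, 2 ≤ b) :
    0 < hjMatrix l 1 0 := by
  obtain ⟨b, t, rfl⟩ := List.exists_cons_of_ne_nil hne
  obtain ⟨hQ, hQP⟩ := hjMatrix_bounds fun x hx => hl x (List.mem_cons_of_mem _ hx)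
  simpa using hQ.trans_lt hQP

lemma head_eq_two_iff {b : ℤ} {l : List ℤ} (hl : ∀ x ∈ b :: l, 2 ≤ x) :
    b = 2 ↔ hjMatrix (b :: l) 0 0 ≤ 2 * hjMatrix (b :: l) 1 0 := by
  obtain ⟨hQ, hQP⟩ := hjMatrix_bounds fun x hx => hl x (List.mem_cons_of_mem _ hx)
  have hb := hl b List.mem_cons_self
  simp only [hjMatrix_cons, hjStep_mul_apply_zero, hjStep_mul_apply_one]
  constructor
  · rintro rfl; linarith
  · intro h; nlinarith

lemma hjMatrix_injOn : Set.InjOn hjMatrix {l | ∀ b ∈ l, 2 ≤ b} := by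
  intro l hl l' hl' h
  induction l generalizing l' with
  | nil =>
    cases l' with
    | nil => rfl
    | cons c u =>
      have := congrFun (congrFun h 1) 0
      simp only [hjMatrix_nil] at this
      exact absurd this (hjMatrix_apply_one_zero_pos (List.cons_ne_nil c u) hl').ne
  | cons b t ih =>
    cases l' with
    | nil =>
      have := congrFun (congrFun h 1) 0
      simp only [hjMatrix_nil] at this
      exact absurd this (hjMatrix_apply_one_zero_pos (List.cons_ne_nil b t) hl).ne'
    | cons c u =>
      have ht : ∀ x ∈ t, 2 ≤ x := fun x hx => hl x (List.mem_cons_of_mem _ hx)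
      have hu : ∀ x ∈ u, 2 ≤ x := fun x hx => hl' x (List.mem_cons_of_mem _ hx)
      rw [hjMatrix_cons, hjMatrix_cons] at h
      have hrow₀ (j : Fin 2) : hjMatrix t 0 j = hjMatrix u 0 j := by
        simpa using congrFun (congrFun h 1) j
      have hrow₁ (j : Fin 2) :
          b * hjMatrix t 0 j - hjMatrix t 1 j = c * hjMatrix u 0 j - hjMatrix u 1 j := by
        simpa using congrFun (congrFun h 0) j
      have hbc : b = c := by
        obtain ⟨hQt, hQPt⟩ := hjMatrix_bounds ht
        obtain ⟨hQu, hQPu⟩ := hjMatrix_bounds hu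
        have := hrow₁ 0
        rw [hrow₀ 0] at this hQPt
        rcases lt_trichotomy b c with hlt | heq | hgt
        · nlinarith
        · exact heq
        · nlinarith
      subst hbc
      have htu : hjMatrix t = hjMatrix u := by
        ext i j
        fin_cases i
        · exact hrow₀ j
        · simpa [hrow₀ j] using hrow₁ j
      rw [ih ht hu htu]

lemma HJ_cons (b : ℤ) (l : List ℤ) : HJ (b :: l) = b - (HJ l)⁻¹ := by
  cases l <;> simp [HJ]

lemma HJ_eq_div {l : List ℤ} (hl : ∀ b ∈ l, 2 ≤ b) :
    HJ l = hjMatrix l 0 0 / hjMatrix l 1 0 := by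
  induction l with
  | nil => simp [HJ]
  | cons b l ih =>
    have hl' : ∀ x ∈ l, 2 ≤ x := fun x hx => hl x (List.mem_cons_of_mem _ hx)
    have hP : (hjMatrix l 0 0 : ℚ) ≠ 0 := by
      have := hjMatrix_bounds hl'
      exact_mod_cast (by omega : hjMatrix l 0 0 ≠ 0)
    rw [HJ_cons, ih hl', hjMatrix_cons, hjStep_mul_apply_zero, hjStep_mul_apply_one]
    field_simp
    push_cast
    ring

lemma hjMatrix_col_of_HJ_eq {l : List ℤ} (hl : ∀ b ∈ l, 2 ≤ b) {p q : ℤ} (hp : 0 < p)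
    (hq : 0 < q) (hpq : IsCoprime p q) (h : HJ l = p / q) :
    hjMatrix l 0 0 = p ∧ hjMatrix l 1 0 = q := by
  rw [HJ_eq_div hl] at h
  have hQ : 0 < hjMatrix l 1 0 := by
    refine lt_of_le_of_ne (hjMatrix_bounds hl).1 fun h0 => ?_
    rw [← h0, Int.cast_zero, div_zero, eq_comm, div_eq_zero_iff] at h
    exact h.elim (by exact_mod_cast hp.ne') (by exact_mod_cast hq.ne')
  exact Rat.div_int_inj hQ hq (Int.isCoprime_iff_gcd_eq_one.mp (isCoprime_hjMatrix l))
    (Int.isCoprime_iff_gcd_eq_one.mp hpq) h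

lemma hjMatrix_blowdown (u : List ℤ) (c : ℤ) :
    hjMatrix (u ++ [c - 1]) = !![0, 1; -1, 2] * hjMatrix (2 :: (u ++ [c])) * !![1, 0; 1, 1] := by
  have hinv : !![0, 1; -1, 2] * hjStep 2 = 1 := by simp [hjStep, one_fin_two]
  have hstep : hjStep c * !![1, 0; 1, 1] = hjStep (c - 1) := by simp [hjStep, sub_eq_add_neg]
  rw [hjMatrix_cons, hjMatrix_append_singleton, hjMatrix_append_singleton, ← Matrix.mul_assoc,
    ← Matrix.mul_assoc, hinv, Matrix.one_mul, Matrix.mul_assoc, hstep]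

def classTMatrix (d n a : ℤ) : Matrix (Fin 2) (Fin 2) ℤ :=
  !![d * n ^ 2, 1 - d * n * (n - a); d * n * a - 1, 1 - d * a * (n - a)]

lemma isCoprime_classT (d n a : ℤ) : IsCoprime (d * n ^ 2) (d * n * a - 1) :=
  ⟨d * a ^ 2, -(d * n * a + 1), by ring⟩

lemma hjMatrix_eq_classTMatrix {l : List ℤ} (hl : ∀ b ∈ l, 2 ≤ b) {d n a : ℤ} (hd : 0 < d)
    (ha : 0 ≤ a) (han : a < n) (h₀₀ : hjMatrix l 0 0 = d * n ^ 2)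
    (h₁₀ : hjMatrix l 1 0 = d * n * a - 1) : hjMatrix l = classTMatrix d n a := by
  set x := hjMatrix l 0 1
  set y := hjMatrix l 1 1
  have hdet : d * n ^ 2 * y - x * (d * n * a - 1) = 1 := by
    rw [← h₀₀, ← h₁₀]; simpa [det_fin_two] using det_hjMatrix l
  have hx := hjMatrix_apply_zero_one_bounds hl
  rw [h₀₀] at hx
  have hdn : 0 < d * n := mul_pos hd (by omega)
  -- `x₀ = 1 - dn(n - a)`, `y₀ = 1 - da(n - a)` solve the same determinant equation, so
  -- `dn² ∣ (dna - 1)(x - x₀)`; coprimality and `-dn² < x, x₀ ≤ 0` force `x = x₀`.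
  have hx₀ : x = 1 - d * n * (n - a) := by
    have hdvd : d * n ^ 2 ∣ (d * n * a - 1) * (x - (1 - d * n * (n - a))) :=
      ⟨y - (1 - d * a * (n - a)), by linear_combination -hdet⟩
    have := Int.eq_zero_of_abs_lt_dvd ((isCoprime_classT d n a).dvd_of_dvd_mul_left hdvd)
      (by rw [abs_lt]; constructor <;> nlinarith)
    linarith
  have hy₀ : y = 1 - d * a * (n - a) := by
    have : d * n ^ 2 * (y - (1 - d * a * (n - a))) = 0 := by
      rw [hx₀] at hdet; linear_combination hdet
    have := (mul_eq_zero.mp this).resolve_left (by nlinarith)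
    linarith
  rw [eta_fin_two (hjMatrix l), classTMatrix, matrix_fin_two_eq_iff]
  exact ⟨h₀₀, hx₀, h₁₀, hy₀⟩

lemma hjMatrix_reverse_of_eq_classTMatrix {l : List ℤ} {d n a : ℤ}
    (h : hjMatrix l = classTMatrix d n a) : hjMatrix l.reverse = classTMatrix d n (n - a) := by
  rw [hjMatrix_reverse, h, classTMatrix, classTMatrix, matrix_fin_two_eq_iff]
  simp only [of_apply, cons_val', cons_val_zero, cons_val_fin_one, cons_val_one, true_and]
  refine ⟨?_, ?_, ?_⟩ <;> ring

lemma classTMatrix_blowdown (d n a : ℤ) :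
    !![0, 1; -1, 2] * classTMatrix d n a * !![1, 0; 1, 1] = classTMatrix d a (2 * a - n) := by
  rw [classTMatrix, classTMatrix, mul_fin_two, mul_fin_two, matrix_fin_two_eq_iff]
  refine ⟨?_, ?_, ?_, ?_⟩ <;> ring

lemma exists_eq_two_cons_append {l : List ℤ} (hl : ∀ b ∈ l, 2 ≤ b) {d n a : ℤ} (hd : 0 < d)
    (ha : 0 < a) (han : a < n) (hna : n < 2 * a) (h : hjMatrix l = classTMatrix d n a) :
    ∃ u c, l = 2 :: (u ++ [c]) ∧ 3 ≤ c := by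
  have hdn : 2 ≤ d * n := by nlinarith
  have hhead : d * n ^ 2 ≤ 2 * (d * n * a - 1) := by nlinarith
  rcases List.eq_nil_or_concat' l with rfl | ⟨L, c, rfl⟩
  · have := congrFun (congrFun h 1) 0
    simp only [hjMatrix_nil, one_apply_ne one_ne_zero, classTMatrix, of_apply, cons_val',
      cons_val_zero, cons_val_fin_one, cons_val_one] at this
    nlinarith
  have hc : c ≠ 2 := by
    have hrev := hjMatrix_reverse_of_eq_classTMatrix h
    rw [List.reverse_append, List.reverse_singleton, List.singleton_append] at hrev
    rw [Ne, head_eq_two_iff (l := L.reverse) (fun x hx => hl x (by simp at hx ⊢; tauto)), hrev]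
    simp only [classTMatrix, of_apply, cons_val', cons_val_zero, cons_val_fin_one, cons_val_one]
    nlinarith
  rcases L with _ | ⟨b, u⟩
  · rw [List.nil_append] at hl h
    refine absurd ((head_eq_two_iff hl).mpr ?_) hc
    simpa [h, classTMatrix] using hhead
  · rw [List.cons_append] at hl h
    have hb : b = 2 := by
      rw [head_eq_two_iff hl, h]
      simpa [classTMatrix] using hhead
    have := hl c (by simp)
    exact ⟨u, c, by rw [hb, List.cons_append], by omega⟩

lemma TGen.reverse {l : List ℤ} (h : TGen l) : TGen l.reverse := by
  induction h with
  | base => exact TGen.base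
  | chain m => simpa using TGen.chain m
  | @left l _ ih =>
    convert TGen.right ih using 1
    rcases List.eq_nil_or_concat' l with rfl | ⟨L, x, rfl⟩ <;> simp
  | @right l _ ih =>
    convert TGen.left ih using 1
    cases l <;> simp

lemma hjMatrix_replicate_two (m : ℕ) :
    hjMatrix (List.replicate m 2) = !![(m : ℤ) + 1, -m; m, 1 - m] := by
  induction m with
  | zero => simp [one_fin_two]
  | succ m ih =>
    rw [List.replicate_succ, hjMatrix_cons, ih, hjStep, mul_fin_two, matrix_fin_two_eq_iff]
    push_cast
    refine ⟨?_, ?_, ?_, ?_⟩ <;> ring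

lemma TGen.of_hjMatrix_eq_classTMatrix_two_one {l : List ℤ} (hl : ∀ b ∈ l, 2 ≤ b) {d : ℤ}
    (hd : 0 < d) (h : hjMatrix l = classTMatrix d 2 1) : TGen l := by
  obtain ⟨m, rfl | rfl⟩ : ∃ m : ℕ, d = 1 ∨ d = m + 2 := ⟨(d - 2).toNat, by omega⟩
  · have : l = [4] := hjMatrix_injOn hl (by simp) (by
      rw [h, hjMatrix_cons, hjMatrix_nil, mul_one, classTMatrix, hjStep, matrix_fin_two_eq_iff]
      norm_num)
    exact this ▸ TGen.base
  · have hchain : ∀ b ∈ 3 :: (List.replicate m 2 ++ [3]), (2 : ℤ) ≤ b := by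
      intro b hb
      simp only [List.mem_cons, List.mem_append, List.mem_replicate, List.not_mem_nil,
        or_false] at hb
      omega
    have : l = 3 :: (List.replicate m 2 ++ [3]) := hjMatrix_injOn hl hchain (by
      rw [h, hjMatrix_cons, hjMatrix_append_singleton, hjMatrix_replicate_two, classTMatrix,
        hjStep, mul_fin_two, mul_fin_two, matrix_fin_two_eq_iff]
      refine ⟨?_, ?_, ?_, ?_⟩ <;> ring)
    exact this ▸ TGen.chain m

theorem TGen.of_hjMatrix_eq_classTMatrix {l : List ℤ} (hl : ∀ b ∈ l, 2 ≤ b) {d n a : ℕ}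
    (hd : 0 < d) (ha : 0 < a) (han : a < n) (h : hjMatrix l = classTMatrix d n a) : TGen l := by
  induction n using Nat.strong_induction_on generalizing l a with
  | _ n ih =>
  have blowup {a : ℕ} {l : List ℤ} (hl : ∀ b ∈ l, 2 ≤ b) (ha : 0 < a) (han : a < n)
      (hna : n < 2 * a) (h : hjMatrix l = classTMatrix d n a) : TGen l := by
    obtain ⟨u, c, rfl, hc⟩ := exists_eq_two_cons_append hl (by exact_mod_cast hd)
      (by exact_mod_cast ha) (by exact_mod_cast han) (by exact_mod_cast hna) h
    have hm : ∀ b ∈ u ++ [c - 1], 2 ≤ b := by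
      simp only [List.mem_append, List.mem_singleton]
      rintro b (hb | rfl)
      · exact hl b (by simp [hb])
      · omega
    have hmT : hjMatrix (u ++ [c - 1]) = classTMatrix d a (2 * a - n : ℕ) := by
      rw [hjMatrix_blowdown, h, classTMatrix_blowdown, Nat.cast_sub hna.le]
      push_cast; rfl
    simpa using TGen.left (ih a han hm (by omega) (by omega) hmT)
  rcases lt_trichotomy n (2 * a) with hlt | rfl | hgt
  · exact blowup hl ha han hlt h
  · refine TGen.of_hjMatrix_eq_classTMatrix_two_one hl (d := d * a ^ 2) (by positivity) ?_
    rw [h, classTMatrix, classTMatrix, matrix_fin_two_eq_iff]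
    push_cast
    refine ⟨?_, ?_, ?_, ?_⟩ <;> ring
  · have hrev := hjMatrix_reverse_of_eq_classTMatrix h
    rw [← Nat.cast_sub han.le] at hrev
    simpa using (blowup (fun b hb => hl b (List.mem_reverse.mp hb)) (by omega) (by omega)
      (by omega) hrev).reverse

theorem class_T_strings_generated_general
    (l : List ℤ) (h2 : ∀ b ∈ l, 2 ≤ b)
    (d n a : ℕ) (hd : 0 < d) (ha : 0 < a) (han : a < n)
    (hHJ : HJ l = (d * n ^ 2 : ℚ) / (d * n * a - 1)) :
    TGen l := by
  have hn : 0 < n := by omega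
  have hdna : (2 : ℤ) ≤ d * n * a := by
    exact_mod_cast Nat.mul_le_mul (Nat.mul_le_mul hd (by omega : 2 ≤ n)) ha
  obtain ⟨h₀₀, h₁₀⟩ := hjMatrix_col_of_HJ_eq h2 (p := d * n ^ 2) (q := d * n * a - 1)
    (by positivity) (by omega) (isCoprime_classT d n a) (by push_cast; exact hHJ)
  exact TGen.of_hjMatrix_eq_classTMatrix h2 hd ha han
    (hjMatrix_eq_classTMatrix h2 (by positivity) (by positivity) (by exact_mod_cast han) h₀₀ h₁₀)

/-- Every string of integers `≥ 2` whose Hirzebruch–Jung value has the form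
`dn²/(dna − 1)` is obtained from the basic strings `[4]` and `[3,2,…,2,3]` by
iterating the two blow-up operations. -/
theorem class_T_strings_generated
    (l : List ℤ) (h2 : ∀ b ∈ l, 2 ≤ b)
    (d n a : ℕ) (hd : 0 < d) (hn : 2 ≤ n) (ha : 0 < a) (han : a < n)
    (hgcd : Nat.gcd a n = 1)
    (hHJ : HJ l = (d * n ^ 2 : ℚ) / (d * n * a - 1)) :
    TGen l :=
  class_T_strings_generated_general l h2 d n a hd ha han hHJ
end
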